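/- arXiv:1003.5301 — 3 statements merged into one kernel-verified Lean document; each statement's English description precedes it below -/
import Mathlib

section
/- Let c=(c_0,c_1,c_2,...) be a sequence of rationals and set c_{-1}=0. Define α_n = c_{2n-1}+c_{2n} and β_n = c_{2n}·c_{2n+1} for all n≥0. Then for every n≥0, Dyck_n(c) = Mot_n(α,β). -/
/-- A step of a Motzkin path: up `(1,1)`, down `(1,-1)`, or horizontal `(1,0)`. -/
inductive MStep : Type
  | up : MStep
  | down : MStep
  | flat : MStep
  deriving DecidableEq

instance : Fintype MStep where
  elems := {MStep.up, MStep.down, MStep.flat}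
  complete := by intro x; cases x <;> simp

/-- The vertical displacement of a Motzkin step. -/
def MStep.val : MStep → ℤ
  | .up => 1
  | .down => -1
  | .flat => 0

/-- The height of the path after its first `k` steps. -/
def mHeight (l : List MStep) (k : ℕ) : ℤ := ((l.take k).map MStep.val).sum

/-- A list of steps is a Motzkin path if it never goes below the x-axis and ends at height 0. -/
def IsMotzkin (l : List MStep) : Prop :=
  (∀ k : ℕ, 0 ≤ mHeight l k) ∧ mHeight l l.length = 0

/-- The weight of a Motzkin path w.r.t. `(b, lam)`: a factor `b i` for every horizontal step
of height `i` and a factor `lam i` for every down step of height `i` (the height of a step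
being the `y`-coordinate of its ending point). -/
def mWeight (b lam : ℕ → ℚ) (l : List MStep) : ℚ :=
  ∏ i ∈ Finset.range l.length,
    match l.getD i MStep.up with
    | .up => 1
    | .flat => b (mHeight l (i + 1)).toNat
    | .down => lam (mHeight l (i + 1)).toNat

open Classical in
/-- `Mot_n(b,lam)`: the sum of the weights of all Motzkin paths of length `n`. -/
noncomputable def motSum (n : ℕ) (b lam : ℕ → ℚ) : ℚ :=
  ∑ f : Fin n → MStep,
    if IsMotzkin (List.ofFn f) then mWeight b lam (List.ofFn f) else 0

/-- A step of a Dyck path: up `(1,1)` or down `(1,-1)`. -/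
inductive DStep : Type
  | up : DStep
  | down : DStep
  deriving DecidableEq

instance : Fintype DStep where
  elems := {DStep.up, DStep.down}
  complete := by intro x; cases x <;> simp

/-- The vertical displacement of a Dyck step. -/
def DStep.val : DStep → ℤ
  | .up => 1
  | .down => -1

/-- The height of the path after its first `k` steps. -/
def dHeight (l : List DStep) (k : ℕ) : ℤ := ((l.take k).map DStep.val).sum

/-- A list of steps is a Dyck path if it never goes below the x-axis and ends at height 0. -/
def IsDyck (l : List DStep) : Prop :=
  (∀ k : ℕ, 0 ≤ dHeight l k) ∧ dHeight l l.length = 0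

/-- The weight of a Dyck path w.r.t. `c`: a factor `c i` for every down step of height `i`
(the height of a step being the `y`-coordinate of its ending point). -/
def dWeight (c : ℕ → ℚ) (l : List DStep) : ℚ :=
  ∏ i ∈ Finset.range l.length,
    match l.getD i DStep.up with
    | .up => 1
    | .down => c (dHeight l (i + 1)).toNat

open Classical in
/-- `Dyck_n(c)`: the sum of the weights of all Dyck paths of length `2n`. -/
noncomputable def dyckSum (n : ℕ) (c : ℕ → ℚ) : ℚ :=
  ∑ f : Fin (2 * n) → DStep,
    if IsDyck (List.ofFn f) then dWeight c (List.ofFn f) else 0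

/-!
Cut a Dyck path of length `2n` into `n` consecutive pairs of steps. After each pair the
height is even, say `2h`, and the pairs `UU`, `DD`, `UD`/`DU` change `h` by `+1`, `-1`, `0`;
so contracting them to `U`, `D`, `H` gives a Motzkin path of length `n`, and conversely a pair
sequence whose contraction is a Motzkin path is a Dyck path unless it has a `DU` at height `0`.
If the contraction ends at height `h`, the pair weighs `c_{2h}` for `UD`, `c_{2h-1}` for `DU`
and `c_{2h} c_{2h+1}` for `DD`. The fibre of a Motzkin path is a product of the fibres of its
steps, so its total weight is a product of the sums `c_{2h-1} + c_{2h} = α_h` over `H` steps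
and `c_{2h} c_{2h+1} = β_h` over `D` steps, which is the Motzkin weight.
-/

open Finset

theorem Finset.prod_range_two_mul {M : Type*} [CommMonoid M] (f : ℕ → M) (n : ℕ) :
    ∏ i ∈ range (2 * n), f i = ∏ k ∈ range n, f (2 * k) * f (2 * k + 1) := by
  induction n with
  | zero => simp
  | succ n ih => rw [mul_add_one, prod_range_succ, prod_range_succ, ih, prod_range_succ, mul_assoc]

theorem Fintype.sum_ite_prod_comp_eq_sum_ite_prod_sum {ι β γ R : Type*} [Fintype ι]
    [DecidableEq ι] [Fintype β] [Fintype γ] [DecidableEq γ] [CommSemiring R] (φ : β → γ)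
    (P : (ι → γ) → Prop) [DecidablePred P] (w : (ι → γ) → ι → β → R) :
    ∑ p : ι → β, (if P (φ ∘ p) then ∏ i, w (φ ∘ p) i (p i) else 0) =
      ∑ g : ι → γ, if P g then ∏ i, ∑ b with φ b = g i, w g i b else 0 := by
  have fiber (g : ι → γ) : ∏ i, ∑ b with φ b = g i, w g i b =
      ∑ p : ι → β, if φ ∘ p = g then ∏ i, w g i (p i) else 0 := by
    simp only [sum_filter, Fintype.prod_sum, Fintype.prod_ite_zero, funext_iff, Function.comp_apply]
  calc ∑ p : ι → β, (if P (φ ∘ p) then ∏ i, w (φ ∘ p) i (p i) else 0)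
      = ∑ p : ι → β, ∑ g : ι → γ,
          if φ ∘ p = g then (if P g then ∏ i, w g i (p i) else 0) else 0 := by
        simp only [sum_ite_eq]
    _ = ∑ g : ι → γ, if P g then ∏ i, ∑ b with φ b = g i, w g i b else 0 := by
        rw [sum_comm]
        refine Finset.sum_congr rfl fun g _ => ?_
        split_ifs <;> simp [fiber]

theorem List.getD_ofFn {α : Type*} {n : ℕ} (f : Fin n → α) (d : α) {i : ℕ} (hi : i < n) :
    (List.ofFn f).getD i d = f ⟨i, hi⟩ := by
  simp [List.getD, hi]

theorem dHeight_succ {l : List DStep} {k : ℕ} (hk : k < l.length) :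
    dHeight l (k + 1) = dHeight l k + l[k].val := by
  rw [dHeight, dHeight, List.map_take, List.map_take, List.sum_take_succ _ k (by simpa using hk)]
  simp

theorem mHeight_succ {l : List MStep} {k : ℕ} (hk : k < l.length) :
    mHeight l (k + 1) = mHeight l k + l[k].val := by
  rw [mHeight, mHeight, List.map_take, List.map_take, List.sum_take_succ _ k (by simpa using hk)]
  simp

theorem dHeight_of_length_le {l : List DStep} {k : ℕ} (hk : l.length ≤ k) :
    dHeight l k = dHeight l l.length := by
  simp [dHeight, List.take_of_length_le hk]

theorem mHeight_of_length_le {l : List MStep} {k : ℕ} (hk : l.length ≤ k) :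
    mHeight l k = mHeight l l.length := by
  simp [mHeight, List.take_of_length_le hk]

def DStep.weight (c : ℕ → ℚ) : DStep → ℕ → ℚ
  | .up, _ => 1
  | .down, h => c h

def MStep.weight (b lam : ℕ → ℚ) : MStep → ℕ → ℚ
  | .up, _ => 1
  | .flat, h => b h
  | .down, h => lam h

theorem dWeight_eq_prod (c : ℕ → ℚ) (l : List DStep) :
    dWeight c l = ∏ i ∈ range l.length, (l.getD i .up).weight c (dHeight l (i + 1)).toNat := by
  unfold dWeight; congr! 2 with i; cases l.getD i .up <;> rfl

theorem mWeight_eq_prod (b lam : ℕ → ℚ) (l : List MStep) :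
    mWeight b lam l =
      ∏ i ∈ range l.length, (l.getD i .up).weight b lam (mHeight l (i + 1)).toNat := by
  unfold mWeight; congr! 2 with i; cases l.getD i .up <;> rfl

def contract : DStep × DStep → MStep
  | (.up, .up) => .up
  | (.down, .down) => .down
  | _ => .flat

/-- The weight of a pair of Dyck steps whose contraction ends at Motzkin height `h`. A pair
`(down, up)` with `h = 0` dips below the axis; its weight `0` (the convention `c_{-1} = 0`)
removes the pair sequences that are not Dyck paths from the sum. -/
def pairWeight (c : ℕ → ℚ) : DStep × DStep → ℕ → ℚ
  | (.up, .up), _ => 1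
  | (.up, .down), h => c (2 * h)
  | (.down, .up), h => if h = 0 then 0 else c (2 * h - 1)
  | (.down, .down), h => c (2 * h) * c (2 * h + 1)

theorem two_mul_val_contract (q : DStep × DStep) : 2 * (contract q).val = q.1.val + q.2.val := by
  rcases q with ⟨_ | _, _ | _⟩ <;> rfl

theorem pairWeight_eq_weight_mul_weight (c : ℕ → ℚ) (q : DStep × DStep) {h : ℤ} (h₀ : 0 ≤ h)
    (h₁ : 0 ≤ 2 * h + q.1.val) :
    pairWeight c q (h + (contract q).val).toNat =
      q.1.weight c (2 * h + q.1.val).toNat * q.2.weight c (2 * (h + (contract q).val)).toNat := by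
  rcases q with ⟨_ | _, _ | _⟩ <;>
    simp only [contract, pairWeight, DStep.weight, DStep.val, MStep.val] at h₁ ⊢
  · simp
  · rw [one_mul]; congr 1; omega
  · simp only [add_zero, mul_one, show h.toNat ≠ 0 by omega, if_false]; congr 1; omega
  · rw [mul_comm]; congr 2 <;> omega

theorem sum_pairWeight_filter_contract (c α β : ℕ → ℚ)
    (hα : ∀ m : ℕ, α m = (if m = 0 then 0 else c (2 * m - 1)) + c (2 * m))
    (hβ : ∀ m : ℕ, β m = c (2 * m) * c (2 * m + 1)) (s : MStep) (h : ℕ) :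
    ∑ q with contract q = s, pairWeight c q h = s.weight α β h := by
  have univ_eq : (univ : Finset (DStep × DStep)) =
      {(.up, .up), (.up, .down), (.down, .up), (.down, .down)} := by decide
  rw [sum_filter, univ_eq]
  cases s <;> simp [contract, pairWeight, MStep.weight, hα, hβ, add_comm]

def pairEquiv (n : ℕ) : (Fin n → DStep × DStep) ≃ (Fin (2 * n) → DStep) where
  toFun p i := if i.val % 2 = 0 then (p ⟨i / 2, by omega⟩).1 else (p ⟨i / 2, by omega⟩).2
  invFun f k := (f ⟨2 * k, by omega⟩, f ⟨2 * k + 1, by omega⟩)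
  left_inv p := by
    funext k
    have h₀ : 2 * k.val / 2 = k := by omega
    have h₁ : (2 * k.val + 1) / 2 = k := by omega
    simp [h₀, h₁]
  right_inv f := by
    funext i
    simp only
    split_ifs <;> congr 1 <;> ext <;> simp <;> omega

theorem pairEquiv_apply_two_mul {n : ℕ} (p : Fin n → DStep × DStep) {k : ℕ} (hk : k < n) :
    pairEquiv n p ⟨2 * k, by omega⟩ = (p ⟨k, hk⟩).1 := by
  have h : 2 * k / 2 = k := by omega
  simp [pairEquiv, h]

theorem pairEquiv_apply_two_mul_add_one {n : ℕ} (p : Fin n → DStep × DStep) {k : ℕ}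
    (hk : k < n) : pairEquiv n p ⟨2 * k + 1, by omega⟩ = (p ⟨k, hk⟩).2 := by
  have h : (2 * k + 1) / 2 = k := by omega
  simp [pairEquiv, h]

section Contraction

variable {n : ℕ} (p : Fin n → DStep × DStep)

theorem mHeight_contract_succ {k : ℕ} (hk : k < n) :
    mHeight (List.ofFn (contract ∘ p)) (k + 1) =
      mHeight (List.ofFn (contract ∘ p)) k + (contract (p ⟨k, hk⟩)).val := by
  simp [mHeight_succ (l := List.ofFn (contract ∘ p)) (k := k) (by simpa using hk)]

theorem dHeight_pairEquiv_two_mul_add_one {k : ℕ} (hk : k < n) :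
    dHeight (List.ofFn (pairEquiv n p)) (2 * k + 1) =
      dHeight (List.ofFn (pairEquiv n p)) (2 * k) + (p ⟨k, hk⟩).1.val := by
  rw [dHeight_succ (by simp; omega), List.getElem_ofFn, pairEquiv_apply_two_mul]

theorem dHeight_pairEquiv_two_mul {k : ℕ} (hk : k ≤ n) :
    dHeight (List.ofFn (pairEquiv n p)) (2 * k) = 2 * mHeight (List.ofFn (contract ∘ p)) k := by
  induction k with
  | zero => simp [dHeight, mHeight]
  | succ k ih =>
    have hk' : k < n := by omega
    rw [mul_add_one, dHeight_succ (by simp; omega), List.getElem_ofFn,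
      pairEquiv_apply_two_mul_add_one p hk', dHeight_pairEquiv_two_mul_add_one p hk',
      ih hk'.le, mHeight_contract_succ p hk', mul_add, two_mul_val_contract, add_assoc]

theorem isMotzkin_contract_of_isDyck (hd : IsDyck (List.ofFn (pairEquiv n p))) :
    IsMotzkin (List.ofFn (contract ∘ p)) := by
  obtain ⟨nonneg, ends⟩ := hd
  have ends' : mHeight (List.ofFn (contract ∘ p)) n = 0 := by
    rw [List.length_ofFn, dHeight_pairEquiv_two_mul p le_rfl] at ends
    omega
  refine ⟨fun k => ?_, by simpa using ends'⟩
  rcases le_or_gt k n with hk | hk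
  · have := nonneg (2 * k)
    rw [dHeight_pairEquiv_two_mul p hk] at this
    omega
  · rw [mHeight_of_length_le (by simp; omega), List.length_ofFn, ends']

theorem prod_pairWeight_eq_zero_of_not_isDyck (c : ℕ → ℚ)
    (hm : IsMotzkin (List.ofFn (contract ∘ p))) (hd : ¬IsDyck (List.ofFn (pairEquiv n p))) :
    ∏ k, pairWeight c (p k) (mHeight (List.ofFn (contract ∘ p)) (k + 1)).toNat = 0 := by
  have ends : dHeight (List.ofFn (pairEquiv n p)) (2 * n) = 0 := by
    have := hm.2
    rw [List.length_ofFn] at this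
    rw [dHeight_pairEquiv_two_mul p le_rfl, this, mul_zero]
  obtain ⟨j, hj⟩ : ∃ j, dHeight (List.ofFn (pairEquiv n p)) j < 0 := by
    by_contra! h
    exact hd ⟨h, by simpa using ends⟩
  have hjn : j < 2 * n := by
    by_contra
    rw [dHeight_of_length_le (by simp; omega), List.length_ofFn, ends] at hj
    exact hj.false
  obtain ⟨k, rfl | rfl⟩ := Nat.even_or_odd' j
  · have := hm.1 k
    rw [dHeight_pairEquiv_two_mul p (by omega)] at hj
    omega
  have hk : k < n := by omega
  have h₀ := hm.1 k
  have h₁ := hm.1 (k + 1)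
  rw [dHeight_pairEquiv_two_mul_add_one p hk, dHeight_pairEquiv_two_mul p hk.le] at hj
  rw [mHeight_contract_succ p hk] at h₁
  refine prod_eq_zero (mem_univ ⟨k, hk⟩) ?_
  rw [mHeight_contract_succ p hk]
  rcases hq : p ⟨k, hk⟩ with ⟨_ | _, _ | _⟩ <;>
    simp [hq, DStep.val, contract, MStep.val, pairWeight] at hj h₁ ⊢ <;> omega

theorem dWeight_pairEquiv (c : ℕ → ℚ) (hd : IsDyck (List.ofFn (pairEquiv n p))) :
    dWeight c (List.ofFn (pairEquiv n p)) =
      ∏ k, pairWeight c (p k) (mHeight (List.ofFn (contract ∘ p)) (k + 1)).toNat := by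
  rw [dWeight_eq_prod, List.length_ofFn, prod_range_two_mul, ← Fin.prod_univ_eq_prod_range]
  refine prod_congr rfl fun ⟨k, hk⟩ _ => ?_
  dsimp only
  have h₁ := hd.1 (2 * k + 1)
  rw [dHeight_pairEquiv_two_mul_add_one p hk, dHeight_pairEquiv_two_mul p hk.le] at h₁
  rw [List.getD_ofFn _ _ (by omega), List.getD_ofFn _ _ (by omega), pairEquiv_apply_two_mul,
    pairEquiv_apply_two_mul_add_one, dHeight_pairEquiv_two_mul_add_one p hk,
    dHeight_pairEquiv_two_mul p hk.le, show 2 * k + 1 + 1 = 2 * (k + 1) by ring,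
    dHeight_pairEquiv_two_mul p hk, mHeight_contract_succ p hk]
  exact (pairWeight_eq_weight_mul_weight c _ ((isMotzkin_contract_of_isDyck p hd).1 k) h₁).symm

end Contraction

open Classical in
theorem dyckSum_eq_sum_contract (n : ℕ) (c : ℕ → ℚ) :
    dyckSum n c = ∑ p : Fin n → DStep × DStep,
      if IsMotzkin (List.ofFn (contract ∘ p)) then
        ∏ k, pairWeight c (p k) (mHeight (List.ofFn (contract ∘ p)) (k + 1)).toNat
      else 0 := by
  rw [dyckSum, ← (pairEquiv n).sum_comp]
  refine Fintype.sum_congr _ _ fun p => ?_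
  by_cases hd : IsDyck (List.ofFn (pairEquiv n p))
  · rw [if_pos hd, if_pos (isMotzkin_contract_of_isDyck p hd), dWeight_pairEquiv p c hd]
  · rw [if_neg hd]
    split_ifs with hm
    · exact (prod_pairWeight_eq_zero_of_not_isDyck p c hm hd).symm
    · rfl

/-- If `α n = c (2n-1) + c (2n)` and `β n = c (2n) * c (2n+1)` (with `c_{-1} = 0`),
then `Dyck_n(c) = Mot_n(α, β)` for all `n ≥ 0`. -/
theorem dyck_eq_motzkin_contraction (c α β : ℕ → ℚ)
    (hα : ∀ m : ℕ, α m = (if m = 0 then 0 else c (2 * m - 1)) + c (2 * m))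
    (hβ : ∀ m : ℕ, β m = c (2 * m) * c (2 * m + 1))
    (n : ℕ) :
    dyckSum n c = motSum n α β := by
  classical
  rw [dyckSum_eq_sum_contract, Fintype.sum_ite_prod_comp_eq_sum_ite_prod_sum contract
    (fun g => IsMotzkin (List.ofFn g))
    fun g k q => pairWeight c q (mHeight (List.ofFn g) (k + 1)).toNat]
  refine Fintype.sum_congr _ _ fun g => ?_
  rw [mWeight_eq_prod, List.length_ofFn, ← Fin.prod_univ_eq_prod_range]
  simp only [sum_pairWeight_filter_contract c α β hα hβ, List.getD_ofFn _ _ (Fin.is_lt _), Fin.eta]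
end

section
/- Let S ∈ ℚ[[X]] be the unique formal power series with constant term 1 satisfying S² = (1-X)(1-5X). Set d_{-1}=1, and define formal power series R_m ∈ ℚ[[X]] for m≥-1 by: R_{-1} = (3(1-X) - S)/(2(1-X)); for n≥0, R_{2n+1} = d_{2n+1} + (1-3X-S)/(2X) (the series 1-3X-S has zero constant term, so the division by 2X is well defined in ℚ[[X]]); and for n≥0, R_{2n} = d_{2n}/(1 - X·R_{2n+1}) (the series 1 - X·R_{2n+1} has constant term 1 and hence is invertible). Then for every m≥-1, R_m·(1 - X·R_{m+1}) = d_m. -/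
/-!
Put `T = (1 - 3X - S)/(2X)`, so that every odd remainder is `R_{2n+1} = d_{2n+1} + T`.
Squaring `S = 1 - 3X - 2XT` turns `S² = (1 - X)(1 - 5X)` into the quadratic relation
`T(1 - 3X) = X(1 + T²)`.
The odd-indexed Fibonacci numbers satisfy `F_{2n-1} + F_{2n+3} = 3 F_{2n+1}`, so consecutive
coefficients satisfy `d_{2n+1} d_{2n+2} = 1` and `d_{2n+2} + d_{2n+3} = 3`. After clearing the unit
`1 - X R_{2n+3}`, these two identities reduce the claim for `m = 2n + 1` to the quadratic relation,
and the same happens for `m = -1`; for even `m` the claim is the definition of `R_m`.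
-/

/-- Fibonacci numbers extended to all integer indices:
`fibZ 0 = 0`, `fibZ 1 = 1`, `fibZ m = fibZ (m-1) + fibZ (m-2)` (so `fibZ (-1) = 1`). -/
def fibZ : ℤ → ℤ
  | Int.ofNat n => Nat.fib n
  | Int.negSucc n => (-1) ^ n * Nat.fib (n + 1)

theorem fibZ_natCast (n : ℕ) : fibZ n = Nat.fib n := rfl

theorem fibZ_add_two (m : ℤ) : fibZ (m + 2) = fibZ (m + 1) + fibZ m := by
  rcases m with n | _ | _ | k
  · show fibZ (n + 2 : ℕ) = fibZ (n + 1 : ℕ) + fibZ n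
    rw [fibZ_natCast, fibZ_natCast, fibZ_natCast, Nat.fib_add_two, Nat.cast_add, add_comm]
  · rfl
  · rfl
  · have h₂ : Int.negSucc (k + 2) + 2 = Int.negSucc k := by omega
    have h₁ : Int.negSucc (k + 2) + 1 = Int.negSucc (k + 1) := by omega
    simp only [h₂, h₁, fibZ, Nat.fib_add_two, pow_succ]
    push_cast
    ring

theorem fibZ_add_four (m : ℤ) : fibZ m + fibZ (m + 4) = 3 * fibZ (m + 2) := by
  have h₀ := fibZ_add_two m
  have h₁ := fibZ_add_two (m + 1)
  have h₂ := fibZ_add_two (m + 2)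
  ring_nf at h₀ h₁ h₂ ⊢
  linarith

theorem fibZ_pos_of_odd {m : ℤ} (hm : Odd m) : 0 < fibZ m := by
  rcases m with n | n
  · rw [Int.ofNat_eq_natCast, Int.odd_coe_nat] at hm
    rw [Int.ofNat_eq_natCast, fibZ_natCast]
    exact_mod_cast Nat.fib_pos.mpr hm.pos
  · have hn : Even n := by
      rwa [Int.negSucc_eq, odd_neg, odd_add_one, Int.even_coe_nat] at hm
    simp only [fibZ, hn.neg_one_pow, one_mul]
    exact_mod_cast Nat.fib_pos.mpr n.succ_pos

def oddFib (n : ℕ) : ℤ := fibZ (2 * n - 1)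

theorem oddFib_pos (n : ℕ) : 0 < oddFib n := fibZ_pos_of_odd ⟨n - 1, by ring⟩

theorem oddFib_cast_ne_zero {K : Type*} [AddGroupWithOne K] [CharZero K] (n : ℕ) :
    (oddFib n : K) ≠ 0 :=
  Int.cast_ne_zero.mpr (oddFib_pos n).ne'

theorem oddFib_add_oddFib_add_two {K : Type*} [Ring K] (n : ℕ) :
    (oddFib n : K) + oddFib (n + 2) = 3 * oddFib (n + 1) := by
  have h : oddFib n + oddFib (n + 2) = 3 * oddFib (n + 1) := by
    have h := fibZ_add_four (2 * n - 1)
    simp only [oddFib]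
    push_cast
    ring_nf at h ⊢
    exact h
  simpa using congrArg (Int.cast : ℤ → K) h

theorem eq_oddFib_div_of_odd {d : ℕ → ℚ} (hdodd : ∀ m : ℕ, 1 ≤ m →
      d (2 * m - 1) = (fibZ (2 * (m : ℤ) - 1) : ℚ) / (fibZ (2 * (m : ℤ) - 3) : ℚ))
    (n : ℕ) :
    d (2 * n + 1) = oddFib (n + 1) / oddFib n := by
  rw [show 2 * n + 1 = 2 * (n + 1) - 1 by omega, hdodd (n + 1) (by omega), oddFib, oddFib]
  push_cast
  ring_nf

theorem eq_oddFib_div_of_even {d : ℕ → ℚ} (hdeven : ∀ m : ℕ, 1 ≤ m →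
      d (2 * m) = (fibZ (2 * (m : ℤ) - 3) : ℚ) / (fibZ (2 * (m : ℤ) - 1) : ℚ)) (n : ℕ) :
    d (2 * n + 2) = oddFib n / oddFib (n + 1) := by
  rw [show 2 * n + 2 = 2 * (n + 1) by omega, hdeven (n + 1) (by omega), oddFib, oddFib]
  push_cast
  ring_nf

theorem Int.eq_neg_one_or_two_mul_or_two_mul_add_one {m : ℤ} (hm : -1 ≤ m) :
    m = -1 ∨ (∃ n : ℕ, m = 2 * n) ∨ ∃ n : ℕ, m = 2 * n + 1 := by
  obtain rfl | hm := hm.eq_or_lt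
  · exact .inl rfl
  obtain ⟨n, hn | hn⟩ := Nat.even_or_odd' m.toNat
  · exact .inr (.inl ⟨n, by omega⟩)
  · exact .inr (.inr ⟨n, by omega⟩)

section RatioSequence

variable {K : Type*} [Field K] {g d : ℕ → K}

theorem ratio_mul_ratio_eq_one (hg : ∀ n, g n ≠ 0)
    (hodd : ∀ n, d (2 * n + 1) = g (n + 1) / g n)
    (heven : ∀ n, d (2 * n + 2) = g n / g (n + 1)) (n : ℕ) :
    d (2 * n + 1) * d (2 * n + 2) = 1 := by
  rw [hodd, heven, div_mul_div_comm, mul_comm, div_self (mul_ne_zero (hg n) (hg (n + 1)))]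

theorem ratio_add_ratio_eq_three (hg : ∀ n, g n ≠ 0)
    (hrec : ∀ n, g n + g (n + 2) = 3 * g (n + 1))
    (hodd : ∀ n, d (2 * n + 1) = g (n + 1) / g n)
    (heven : ∀ n, d (2 * n + 2) = g n / g (n + 1)) (n : ℕ) :
    d (2 * n + 2) + d (2 * n + 3) = 3 := by
  rw [heven, show 2 * n + 3 = 2 * (n + 1) + 1 by ring, hodd, ← add_div, hrec, mul_div_assoc,
    div_self (hg (n + 1)), mul_one]

end RatioSequence

section QuadraticRelation

variable {A : Type*} [CommRing A] {x T : A}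

theorem add_mul_one_sub_mul_eq_self_of_quadratic (hT : T * (1 - 3 * x) = x * (1 + T ^ 2))
    {a b c P : A} (hab : a * b = 1) (hbc : b + c = 3) (hu : IsUnit (1 - x * (c + T)))
    (hP : P * (1 - x * (c + T)) = b) :
    (a + T) * (1 - x * P) = a := by
  refine hu.mul_right_cancel ?_
  linear_combination (-(a + T) * x) * hP - x * hab - x * T * hbc + hT

theorem mul_one_sub_mul_eq_one_of_quadratic (hT : T * (1 - 3 * x) = x * (1 + T ^ 2))
    {P Q : A} (hx : IsUnit (1 - x)) (hu : IsUnit (1 - x * (1 + T)))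
    (hQ : Q * (1 - x) = 1 + x * T) (hP : P * (1 - x * (1 + T)) = 1) :
    Q * (1 - x * P) = 1 := by
  refine hx.mul_right_cancel (hu.mul_right_cancel ?_)
  linear_combination (-(1 - x) * x * Q) * hP + (1 - x * (1 + T) - x) * hQ + x * hT

end QuadraticRelation

namespace PowerSeries

theorem isUnit_one_sub_X_mul {A : Type*} [CommRing A] (f : A⟦X⟧) : IsUnit (1 - X * f) := by
  simp [isUnit_iff_constantCoeff]

variable {K : Type*} [CommRing K] [IsDomain K] [CharZero K]

theorem natCast_mul_X_ne_zero {n : ℕ} (hn : n ≠ 0) : (n : K⟦X⟧) * X ≠ 0 :=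
  mul_ne_zero (fun h => hn (by simpa using congrArg constantCoeff h)) X_ne_zero

theorem mul_one_sub_three_X_eq_of_sq_eq {S T : K⟦X⟧} (hS : S ^ 2 = (1 - X) * (1 - 5 * X))
    (hT : T * (2 * X) = 1 - 3 * X - S) :
    T * (1 - 3 * X) = X * (1 + T ^ 2) := by
  refine mul_left_cancel₀ (by exact_mod_cast natCast_mul_X_ne_zero (K := K) four_ne_zero) ?_
  linear_combination (1 - 3 * X + S - T * (2 * X)) * hT - hS

theorem mul_one_sub_X_mul_eq_one_of_sq_eq {F : Type*} [Field F] [CharZero F] {S T P Q : F⟦X⟧}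
    (hS : S ^ 2 = (1 - X) * (1 - 5 * X)) (hT : T * (2 * X) = 1 - 3 * X - S)
    (hQ : Q * (2 * (1 - X)) = 3 * (1 - X) - S) (hP : P * (1 - X * (1 + T)) = 1) :
    Q * (1 - X * P) = 1 := by
  refine mul_one_sub_mul_eq_one_of_quadratic (mul_one_sub_three_X_eq_of_sq_eq hS hT)
    (by simp [isUnit_iff_constantCoeff]) (isUnit_one_sub_X_mul _) ?_ hP
  refine (IsUnit.mul_right_inj (by simp [isUnit_iff_constantCoeff, map_ofNat] :
    IsUnit (2 : F⟦X⟧))).mp ?_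
  linear_combination hQ - hT

end PowerSeries

open PowerSeries

theorem continued_fraction_remainders_general
(d : ℕ → ℚ) (hd0 : d 0 = 1)
    (hdodd : ∀ m : ℕ, 1 ≤ m →
      d (2 * m - 1) = (fibZ (2 * (m : ℤ) - 1) : ℚ) / (fibZ (2 * (m : ℤ) - 3) : ℚ))
    (hdeven : ∀ m : ℕ, 1 ≤ m →
      d (2 * m) = (fibZ (2 * (m : ℤ) - 3) : ℚ) / (fibZ (2 * (m : ℤ) - 1) : ℚ))
    (S : PowerSeries ℚ)
    (hS : S ^ 2 = (1 - PowerSeries.X) * (1 - 5 * PowerSeries.X))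
    (R : ℤ → PowerSeries ℚ)
    (hRneg : R (-1) * (2 * (1 - PowerSeries.X)) = 3 * (1 - PowerSeries.X) - S)
    (hRodd : ∀ n : ℕ, R (2 * (n : ℤ) + 1) * (2 * PowerSeries.X) =
      PowerSeries.C (d (2 * n + 1)) * (2 * PowerSeries.X) + (1 - 3 * PowerSeries.X - S))
    (hReven : ∀ n : ℕ, R (2 * (n : ℤ)) * (1 - PowerSeries.X * R (2 * (n : ℤ) + 1)) =
      PowerSeries.C (d (2 * n)))
    (m : ℤ) (hm : -1 ≤ m) :
    R m * (1 - PowerSeries.X * R (m + 1)) =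
      PowerSeries.C (if m = -1 then 1 else d m.toNat) := by
  have hodd := eq_oddFib_div_of_odd hdodd
  have heven := eq_oddFib_div_of_even hdeven
  have hd1 : d 1 = 1 :=
    (hodd 0).trans (by rw [show oddFib 1 = oddFib 0 by decide, div_self (oddFib_cast_ne_zero 0)])
  have hR1 : R 1 * (2 * X) = C (d 1) * (2 * X) + (1 - 3 * X - S) := by
    simpa only [Nat.cast_zero, mul_zero, zero_add] using hRodd 0
  set T := R 1 - C (d 1)
  have hR (n : ℕ) : R (2 * n + 1) = C (d (2 * n + 1)) + T :=
    mul_right_cancel₀ (by exact_mod_cast natCast_mul_X_ne_zero (K := ℚ) two_ne_zero)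
      (by linear_combination hRodd n - hR1)
  have hTS : T * (2 * X) = 1 - 3 * X - S := by linear_combination hR1
  have hT := mul_one_sub_three_X_eq_of_sq_eq hS hTS
  obtain rfl | ⟨n, rfl⟩ | ⟨n, rfl⟩ := Int.eq_neg_one_or_two_mul_or_two_mul_add_one hm
  · rw [if_pos rfl, map_one, neg_add_cancel]
    have hP := hReven 0
    simp only [Nat.cast_zero, mul_zero, zero_add, hd0, map_one] at hP
    rw [show R 1 = 1 + T by simp [T, hd1]] at hP
    exact mul_one_sub_X_mul_eq_one_of_sq_eq hS hTS hRneg hP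
  · rw [if_neg (by omega), show (2 * (n : ℤ)).toNat = 2 * n by omega]
    exact hReven n
  · rw [if_neg (by omega), show (2 * (n : ℤ) + 1).toNat = 2 * n + 1 by omega,
      show 2 * (n : ℤ) + 1 + 1 = 2 * (n + 1 : ℕ) by push_cast; ring, hR n]
    have hP := hReven (n + 1)
    rw [hR (n + 1), show 2 * (n + 1) + 1 = 2 * n + 3 by ring,
      show 2 * (n + 1) = 2 * n + 2 by ring] at hP
    refine add_mul_one_sub_mul_eq_self_of_quadratic hT ?_ ?_ (isUnit_one_sub_X_mul _) hP
    · rw [← map_mul, ratio_mul_ratio_eq_one oddFib_cast_ne_zero hodd heven, map_one]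
    · rw [← map_add, ratio_add_ratio_eq_three oddFib_cast_ne_zero oddFib_add_oddFib_add_two
        hodd heven, map_ofNat]

/-- With `S` the power series with constant term 1 and `S² = (1-X)(1-5X)`, `d_{-1} = 1`,
`R_{-1} = (3(1-X) - S)/(2(1-X))`, `R_{2n+1} = d_{2n+1} + (1-3X-S)/(2X)` and
`R_{2n} = d_{2n}/(1 - X R_{2n+1})`, one has `R_m (1 - X R_{m+1}) = d_m` for all `m ≥ -1`. -/
theorem continued_fraction_remainders
(d : ℕ → ℚ) (hd0 : d 0 = 1)
    (hdodd : ∀ m : ℕ, 1 ≤ m →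
      d (2 * m - 1) = (fibZ (2 * (m : ℤ) - 1) : ℚ) / (fibZ (2 * (m : ℤ) - 3) : ℚ))
    (hdeven : ∀ m : ℕ, 1 ≤ m →
      d (2 * m) = (fibZ (2 * (m : ℤ) - 3) : ℚ) / (fibZ (2 * (m : ℤ) - 1) : ℚ))
    (S : PowerSeries ℚ)
    (hS : S ^ 2 = (1 - PowerSeries.X) * (1 - 5 * PowerSeries.X))
    (hS0 : PowerSeries.constantCoeff S = 1)
    (R : ℤ → PowerSeries ℚ)
    (hRneg : R (-1) * (2 * (1 - PowerSeries.X)) = 3 * (1 - PowerSeries.X) - S)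
    (hRodd : ∀ n : ℕ, R (2 * (n : ℤ) + 1) * (2 * PowerSeries.X) =
      PowerSeries.C (d (2 * n + 1)) * (2 * PowerSeries.X) + (1 - 3 * PowerSeries.X - S))
    (hReven : ∀ n : ℕ, R (2 * (n : ℤ)) * (1 - PowerSeries.X * R (2 * (n : ℤ) + 1)) =
      PowerSeries.C (d (2 * n)))
    (m : ℤ) (hm : -1 ≤ m) :
    R m * (1 - PowerSeries.X * R (m + 1)) =
      PowerSeries.C (if m = -1 then 1 else d m.toNat) :=
  continued_fraction_remainders_general d hd0 hdodd hdeven S hS R hRneg hRodd hReven m hm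
end

section
/- For every n≥0, the number of Schröder paths of length 2n having no peak at even height equals #SCH_even(n), where a peak is an up step immediately followed by a down step, and the height of a peak is the height reached by its up step. -/
/-- A step of a Schröder path: up `(1,1)`, down `(1,-1)`, or double horizontal `(2,0)`. -/
inductive SStep : Type
  | up : SStep
  | down : SStep
  | hh : SStep
  deriving DecidableEq

/-- The vertical displacement of a Schröder step. -/
def SStep.val : SStep → ℤ
  | .up => 1
  | .down => -1
  | .hh => 0

/-- The horizontal displacement (width) of a Schröder step. -/
def SStep.width : SStep → ℕ
  | .up => 1
  | .down => 1
  | .hh => 2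

/-- The height of the path after its first `k` steps. -/
def sHeight (l : List SStep) (k : ℕ) : ℤ := ((l.take k).map SStep.val).sum

/-- A list of steps is a Schröder path of length `2n` if its total width is `2n`,
it never goes below the x-axis, and it ends at height 0. -/
def IsSchroeder (n : ℕ) (l : List SStep) : Prop :=
  (l.map SStep.width).sum = 2 * n ∧ (∀ k : ℕ, 0 ≤ sHeight l k) ∧ sHeight l l.length = 0

/-- All double horizontal steps of the path have even height. -/
def AllHHEven (l : List SStep) : Prop :=
  ∀ i : ℕ, l.getD i SStep.up = SStep.hh → Even (sHeight l (i + 1))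

/-- The path has no peak (an up step immediately followed by a down step) at even height,
the height of a peak being the height reached by its up step. -/
def NoEvenPeak (l : List SStep) : Prop :=
  ∀ i : ℕ, l.getD i SStep.down = SStep.up → l.getD (i + 1) SStep.up = SStep.down →
    ¬ Even (sHeight l (i + 1))

/-! Replacing every double horizontal step at odd height `h` by a peak `U D`, whose height `h + 1`
is even, turns a Schröder path without peaks at even height into one whose double horizontal steps
all have even height; replacing every peak at even height by a double horizontal step undoes this.
Both replacements preserve the width and all heights along the path and only need the parity of
the current height, so they are scans of the step list that carry the starting height `h`. -/

namespace SStep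

variable {n : ℕ} {h : ℤ} {a : SStep} {l : List SStep}

@[simp] lemma val_up : up.val = 1 := rfl
@[simp] lemma val_down : down.val = -1 := rfl
@[simp] lemma val_hh : hh.val = 0 := rfl

@[simp] lemma sHeight_zero (l : List SStep) : sHeight l 0 = 0 := rfl

@[simp] lemma sHeight_cons (a : SStep) (l : List SStep) (k : ℕ) :
    sHeight (a :: l) (k + 1) = a.val + sHeight l k := by
  simp [sHeight]

def NonnegFrom (h : ℤ) (l : List SStep) : Prop :=
  ∀ k : ℕ, 0 ≤ h + sHeight l k

def NoEvenPeakFrom (h : ℤ) (l : List SStep) : Prop :=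
  ∀ i : ℕ, l.getD i .down = .up → l.getD (i + 1) .up = .down →
    ¬ Even (h + sHeight l (i + 1))

def AllHHEvenFrom (h : ℤ) (l : List SStep) : Prop :=
  ∀ i : ℕ, l.getD i .up = .hh → Even (h + sHeight l (i + 1))

lemma isSchroeder_iff :
    IsSchroeder n l ↔ (l.map width).sum = 2 * n ∧ NonnegFrom 0 l ∧ (l.map val).sum = 0 := by
  simp [IsSchroeder, NonnegFrom, sHeight]

lemma noEvenPeak_iff : NoEvenPeak l ↔ NoEvenPeakFrom 0 l := by
  simp [NoEvenPeak, NoEvenPeakFrom]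

lemma allHHEven_iff : AllHHEven l ↔ AllHHEvenFrom 0 l := by
  simp [AllHHEven, AllHHEvenFrom]

@[simp] lemma nonnegFrom_cons : NonnegFrom h (a :: l) ↔ 0 ≤ h ∧ NonnegFrom (h + a.val) l := by
  rw [NonnegFrom, ← Nat.and_forall_add_one]
  simp only [sHeight_cons, sHeight_zero, add_zero, ← add_assoc, NonnegFrom]

@[simp] lemma noEvenPeakFrom_nil : NoEvenPeakFrom h [] := by
  simp [NoEvenPeakFrom]

@[simp] lemma noEvenPeakFrom_cons :
    NoEvenPeakFrom h (a :: l) ↔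
      (a = up → l.head? = some down → ¬ Even (h + 1)) ∧ NoEvenPeakFrom (h + a.val) l := by
  have head : l.getD 0 up = down ↔ l.head? = some down := by cases l <;> simp
  rw [NoEvenPeakFrom, ← Nat.and_forall_add_one]
  simp only [List.getD_cons_zero, List.getD_cons_succ, sHeight_cons, sHeight_zero, add_zero,
    ← add_assoc, zero_add, head]
  refine and_congr ⟨fun H ha => ?_, fun H ha => ?_⟩ Iff.rfl <;> subst ha <;> exact H rfl

@[simp] lemma allHHEvenFrom_nil : AllHHEvenFrom h [] := by
  simp [AllHHEvenFrom]

@[simp] lemma allHHEvenFrom_cons :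
    AllHHEvenFrom h (a :: l) ↔ (a = hh → Even h) ∧ AllHHEvenFrom (h + a.val) l := by
  rw [AllHHEvenFrom, ← Nat.and_forall_add_one]
  cases a <;> simp [AllHHEvenFrom, add_assoc]

def expandOddHH : ℤ → List SStep → List SStep
  | _, [] => []
  | h, a :: l =>
    if a = hh ∧ ¬ Even h then up :: down :: expandOddHH h l else a :: expandOddHH (h + a.val) l

-- The peak `U D` starting at height `h` has height `h + 1`, so it is collapsed when `h` is odd.
def collapseEvenPeaks : ℤ → List SStep → List SStep
  | _, [] => []
  | h, up :: down :: l =>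
    if Even h then up :: down :: collapseEvenPeaks h l else hh :: collapseEvenPeaks h l
  | h, a :: l => a :: collapseEvenPeaks (h + a.val) l

section Additive

variable {M : Type*} [AddMonoid M] (f : SStep → M)

lemma sum_map_expandOddHH (hf : f up + f down = f hh) :
    ((expandOddHH h l).map f).sum = (l.map f).sum := by
  induction l generalizing h with
  | nil => rfl
  | cons a l ih =>
    rw [expandOddHH]
    split_ifs with ha
    · simp [ih, ha.1, ← hf, add_assoc]
    · simp [ih]

lemma sum_map_collapseEvenPeaks (hf : f up + f down = f hh) :
    ((collapseEvenPeaks h l).map f).sum = (l.map f).sum := by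
  induction h, l using collapseEvenPeaks.induct with
  | case1 => rfl
  | case2 h l heven ih => simp [collapseEvenPeaks, heven, ih]
  | case3 h l hodd ih => simp [collapseEvenPeaks, hodd, ih, ← hf, add_assoc]
  | case4 h a l ha ih => simp [collapseEvenPeaks.eq_3 _ _ _ ha, ih]

end Additive

lemma nonnegFrom_expandOddHH : NonnegFrom h (expandOddHH h l) ↔ NonnegFrom h l := by
  induction l generalizing h with
  | nil => rfl
  | cons a l ih =>
    rw [expandOddHH]
    split_ifs with ha
    · obtain ⟨rfl, -⟩ := ha
      simp only [nonnegFrom_cons, val_up, val_down, val_hh, add_neg_cancel_right, add_zero, ih]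
      exact ⟨fun H => ⟨H.1, H.2.2⟩, fun H => ⟨H.1, by linarith [H.1], H.2⟩⟩
    · simp [ih]

lemma nonnegFrom_collapseEvenPeaks : NonnegFrom h (collapseEvenPeaks h l) ↔ NonnegFrom h l := by
  induction h, l using collapseEvenPeaks.induct with
  | case1 => rfl
  | case2 h l heven ih => simp [collapseEvenPeaks, heven, ih]
  | case3 h l hodd ih =>
    simp only [collapseEvenPeaks, hodd, if_false, nonnegFrom_cons, val_up, val_down, val_hh,
      add_neg_cancel_right, add_zero, ih]
    exact ⟨fun H => ⟨H.1, by linarith [H.1], H.2⟩, fun H => ⟨H.1, H.2.2⟩⟩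
  | case4 h a l ha ih => simp [collapseEvenPeaks.eq_3 _ _ _ ha, ih]

lemma isSchroeder_expandOddHH : IsSchroeder n (expandOddHH 0 l) ↔ IsSchroeder n l := by
  simp only [isSchroeder_iff, nonnegFrom_expandOddHH, sum_map_expandOddHH width rfl,
    sum_map_expandOddHH val rfl]

lemma isSchroeder_collapseEvenPeaks :
    IsSchroeder n (collapseEvenPeaks 0 l) ↔ IsSchroeder n l := by
  simp only [isSchroeder_iff, nonnegFrom_collapseEvenPeaks, sum_map_collapseEvenPeaks width rfl,
    sum_map_collapseEvenPeaks val rfl]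

lemma head?_expandOddHH_eq_some_down :
    (expandOddHH h l).head? = some down ↔ l.head? = some down := by
  cases l with
  | nil => simp [expandOddHH]
  | cons a l =>
    rw [expandOddHH]
    split_ifs with ha
    · simp [ha.1]
    · simp

lemma head?_collapseEvenPeaks_eq_some_down :
    (collapseEvenPeaks h l).head? = some down ↔ l.head? = some down := by
  induction h, l using collapseEvenPeaks.induct with
  | case1 => simp [collapseEvenPeaks]
  | case2 h l heven => simp [collapseEvenPeaks, heven]
  | case3 h l hodd => simp [collapseEvenPeaks, hodd]
  | case4 h a l ha => simp [collapseEvenPeaks.eq_3 _ _ _ ha]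

lemma allHHEvenFrom_expandOddHH : AllHHEvenFrom h (expandOddHH h l) := by
  induction l generalizing h with
  | nil => simp [expandOddHH]
  | cons a l ih =>
    rw [expandOddHH]
    split_ifs with ha
    · simp [ih]
    · simp_all

lemma noEvenPeakFrom_collapseEvenPeaks : NoEvenPeakFrom h (collapseEvenPeaks h l) := by
  induction h, l using collapseEvenPeaks.induct with
  | case1 => simp [collapseEvenPeaks]
  | case2 h l heven ih => simp [collapseEvenPeaks, heven, ih]
  | case3 h l hodd ih => simp [collapseEvenPeaks, hodd, ih]
  | case4 h a l ha ih =>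
    simp only [collapseEvenPeaks.eq_3 _ _ _ ha, noEvenPeakFrom_cons, ih, and_true,
      head?_collapseEvenPeaks_eq_some_down]
    rintro rfl hl
    cases l <;> simp_all

lemma collapseEvenPeaks_expandOddHH (hl : NoEvenPeakFrom h l) :
    collapseEvenPeaks h (expandOddHH h l) = l := by
  induction h, l using collapseEvenPeaks.induct with
  | case1 => simp [expandOddHH, collapseEvenPeaks]
  | case2 h l heven ih => simp_all [expandOddHH, collapseEvenPeaks]
  | case3 h l hodd ih =>
    rw [noEvenPeakFrom_cons] at hl
    exact absurd (Int.even_add_one.2 hodd) (hl.1 rfl rfl)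
  | case4 h a l ha ih =>
    rw [noEvenPeakFrom_cons] at hl
    rw [expandOddHH]
    split_ifs with hodd
    · obtain ⟨rfl, hodd⟩ := hodd
      simp_all [collapseEvenPeaks]
    · rw [collapseEvenPeaks.eq_3, ih hl.2]
      rintro l' rfl he
      have := head?_expandOddHH_eq_some_down.1 (by rw [he]; rfl)
      cases l <;> simp_all

lemma expandOddHH_collapseEvenPeaks (hl : AllHHEvenFrom h l) :
    expandOddHH h (collapseEvenPeaks h l) = l := by
  induction h, l using collapseEvenPeaks.induct with
  | case1 => simp [expandOddHH, collapseEvenPeaks]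
  | case2 h l heven ih => simp_all [expandOddHH, collapseEvenPeaks]
  | case3 h l hodd ih =>
    rw [collapseEvenPeaks, if_neg hodd, expandOddHH, if_pos ⟨rfl, hodd⟩, ih (by simpa using hl)]
  | case4 h a l ha ih =>
    rw [allHHEvenFrom_cons] at hl
    rw [collapseEvenPeaks.eq_3 _ _ _ ha, expandOddHH, if_neg (fun h' => h'.2 (hl.1 h'.1)),
      ih hl.2]

def noEvenPeakEquivAllHHEven (n : ℕ) :
    {l : List SStep // IsSchroeder n l ∧ NoEvenPeak l} ≃
      {l : List SStep // IsSchroeder n l ∧ AllHHEven l} where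
  toFun l := ⟨expandOddHH 0 l, isSchroeder_expandOddHH.2 l.2.1,
    allHHEven_iff.2 allHHEvenFrom_expandOddHH⟩
  invFun l := ⟨collapseEvenPeaks 0 l, isSchroeder_collapseEvenPeaks.2 l.2.1,
    noEvenPeak_iff.2 noEvenPeakFrom_collapseEvenPeaks⟩
  left_inv l := Subtype.ext (collapseEvenPeaks_expandOddHH (noEvenPeak_iff.1 l.2.2))
  right_inv l := Subtype.ext (expandOddHH_collapseEvenPeaks (allHHEven_iff.1 l.2.2))

end SStep

/-- The number of Schröder paths of length `2n` with no peak at even height equals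
`#SCH_even(n)`. -/
theorem schroeder_no_even_peak_eq_schroeder_even (n : ℕ) :
    Nat.card {l : List SStep // IsSchroeder n l ∧ NoEvenPeak l} =
      Nat.card {l : List SStep // IsSchroeder n l ∧ AllHHEven l} :=
  Nat.card_congr (SStep.noEvenPeakEquivAllHHEven n)
end
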